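/- arXiv:2507.09922 — 3 statements merged into one kernel-verified Lean document; each statement's English description precedes it below -/
import Mathlib

section
/- Let N ≥ 2 be an integer and 1 < p < ∞ with conjugate exponent p'. Let f ∈ L^p(ℝ^N × ℝ^N) be nonnegative with finite kinetic energy 𝒦(f) = ∫_{ℝ^N×ℝ^N} |v|² f(x,v) dx dv < ∞, and set ρ(x) = ∫_{ℝ^N} f(x,v) dv. Let r = r(p) = (2p + N(p−1))/(2 + N(p−1)). Then ρ ∈ L^r(ℝ^N) and ‖ρ‖_{L^r} ≤ (1 + (ω_N/N)^{1/p'}) · ‖f‖_{L^p}^{2p'/(N+2p')} · 𝒦(f)^{N/(N+2p')}. -/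
/-!
For each `x`, split the velocity integral `ρ(x) = ∫ f(x,v) dv` at a radius `R`: on the ball
`|v| < R` Hölder gives `‖f(x,·)‖_p (ω_N R^N / N)^{1/p'}`, outside it `f ≤ |v|² f / R²` gives
`K(x) / R²` with `K(x) = ∫ |v|² f(x,v) dv`. Choosing `R` to balance the two terms yields
`ρ(x) ≤ C ‖f(x,·)‖_p^{2p'/(N+2p')} K(x)^{N/(N+2p')}`, and the exponent `r` is exactly the one for
which Hölder's inequality in `x` turns `∫ ρ^r` into a product of powers of `‖f‖_p^p` and `𝒦(f)`.
-/

open MeasureTheory Metric Module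
open scoped ENNReal NNReal

namespace ENNReal

theorem mul_div_rpow_eq {G : ℝ≥0∞} (hG0 : G ≠ 0) (hGtop : G ≠ ∞) (K : ℝ≥0∞) {c : ℝ}
    (hc : 0 ≤ c) : G * (K / G) ^ c = G ^ (1 - c) * K ^ c := by
  rw [div_rpow_of_nonneg _ _ hc, rpow_sub _ _ hG0 hGtop, rpow_one, div_eq_mul_inv,
    div_eq_mul_inv]
  ring

theorem le_mul_rpow_mul_rpow_of_forall_le {I G K B : ℝ≥0∞} {a b : ℝ} (ha : 0 < a) (hb : 0 < b)
    (hG0 : G ≠ 0) (hGtop : G ≠ ∞) (hK0 : K ≠ 0) (hKtop : K ≠ ∞)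
    (hI : ∀ R : ℝ≥0, 0 < R → I ≤ G * (R : ℝ≥0∞) ^ a * B + K / (R : ℝ≥0∞) ^ b) :
    I ≤ (1 + B) * G ^ (b / (a + b)) * K ^ (a / (a + b)) := by
  set R := (K / G) ^ (1 / (a + b)) with hR
  have hKG0 : K / G ≠ 0 := ENNReal.div_ne_zero.2 ⟨hK0, hGtop⟩
  have hKGtop : K / G ≠ ∞ := div_ne_top hKtop hG0
  have hR0 : R ≠ 0 := (rpow_pos (pos_iff_ne_zero.2 hKG0) hKGtop).ne'
  have hRtop : R ≠ ∞ := rpow_ne_top_of_nonneg (by positivity) hKGtop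
  have hinner : G * R ^ a = G ^ (b / (a + b)) * K ^ (a / (a + b)) := by
    rw [hR, ← rpow_mul, one_div_mul_eq_div, mul_div_rpow_eq hG0 hGtop _ (by positivity)]
    congr 2
    field_simp
    ring
  have houter : K / R ^ b = G ^ (b / (a + b)) * K ^ (a / (a + b)) := by
    rw [hR, ← rpow_mul, one_div_mul_eq_div, div_eq_mul_inv, ← inv_rpow,
      ENNReal.inv_div (.inr hKtop) (.inr hK0), mul_div_rpow_eq hK0 hKtop _ (by positivity),
      mul_comm]
    congr 2
    field_simp
    ring
  calc I ≤ G * ((R.toNNReal : ℝ≥0∞)) ^ a * B + K / (R.toNNReal : ℝ≥0∞) ^ b :=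
        hI _ (toNNReal_pos hR0 hRtop)
    _ = (1 + B) * G ^ (b / (a + b)) * K ^ (a / (a + b)) := by
        rw [coe_toNNReal hRtop, hinner, houter]
        ring

end ENNReal

theorem lintegral_rpow_le_of_ae_le_mul_rpow_mul_rpow {X : Type*} [MeasurableSpace X]
    (ν : Measure X) {Φ G K : X → ℝ≥0∞} (hG : AEMeasurable G ν) (hK : AEMeasurable K ν)
    (C : ℝ≥0∞) {a b r : ℝ} (ha : 0 ≤ a) (hb : 0 ≤ b) (hr : 0 < r) (habr : a * r + b * r = 1)
    (hΦ : ∀ᵐ x ∂ν, Φ x ≤ C * G x ^ a * K x ^ b) :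
    (∫⁻ x, Φ x ^ r ∂ν) ^ (1 / r) ≤ C * (∫⁻ x, G x ∂ν) ^ a * (∫⁻ x, K x ∂ν) ^ b := by
  have hpow : ∀ᵐ x ∂ν, Φ x ^ r ≤ C ^ r * (G x ^ (a * r) * K x ^ (b * r)) := by
    filter_upwards [hΦ] with x hx
    calc Φ x ^ r ≤ (C * G x ^ a * K x ^ b) ^ r := ENNReal.rpow_le_rpow hx hr.le
      _ = C ^ r * (G x ^ (a * r) * K x ^ (b * r)) := by
        rw [ENNReal.mul_rpow_of_nonneg _ _ hr.le, ENNReal.mul_rpow_of_nonneg _ _ hr.le,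
          ENNReal.rpow_mul, ENNReal.rpow_mul, mul_assoc]
  have hint : ∫⁻ x, Φ x ^ r ∂ν ≤ C ^ r * ((∫⁻ x, G x ∂ν) ^ (a * r) * (∫⁻ x, K x ∂ν) ^ (b * r)) :=
    calc ∫⁻ x, Φ x ^ r ∂ν ≤ ∫⁻ x, C ^ r * (G x ^ (a * r) * K x ^ (b * r)) ∂ν :=
          lintegral_mono_ae hpow
      _ = C ^ r * ∫⁻ x, G x ^ (a * r) * K x ^ (b * r) ∂ν :=
          lintegral_const_mul'' _ ((hG.pow_const _).mul (hK.pow_const _))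
      _ ≤ C ^ r * ((∫⁻ x, G x ∂ν) ^ (a * r) * (∫⁻ x, K x ∂ν) ^ (b * r)) := by
          gcongr
          exact ENNReal.lintegral_mul_norm_pow_le hG hK (by positivity) (by positivity) habr
  calc (∫⁻ x, Φ x ^ r ∂ν) ^ (1 / r)
      ≤ (C ^ r * ((∫⁻ x, G x ∂ν) ^ (a * r) * (∫⁻ x, K x ∂ν) ^ (b * r))) ^ (1 / r) :=
        ENNReal.rpow_le_rpow hint (by positivity)
    _ = C * (∫⁻ x, G x ∂ν) ^ a * (∫⁻ x, K x ∂ν) ^ b := by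
        have hcancel (c : ℝ) : c * r * (1 / r) = c := by field_simp
        rw [ENNReal.mul_rpow_of_nonneg _ _ (by positivity),
          ENNReal.mul_rpow_of_nonneg _ _ (by positivity), ← ENNReal.rpow_mul, ← ENNReal.rpow_mul,
          ← ENNReal.rpow_mul, mul_one_div_cancel hr.ne', hcancel, hcancel,
          ENNReal.rpow_one, mul_assoc]

theorem eLpNorm_integral_prod_right_le {X Y : Type*} [MeasurableSpace X] [MeasurableSpace Y]
    (ν : Measure X) (μ : Measure Y) (f : X × Y → ℝ) {r : ℝ} (hr : 0 < r) :
    eLpNorm (fun x => ∫ v, f (x, v) ∂μ) (ENNReal.ofReal r) ν ≤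
      (∫⁻ x, (∫⁻ v, ‖f (x, v)‖ₑ ∂μ) ^ r ∂ν) ^ (1 / r) := by
  rw [eLpNorm_eq_lintegral_rpow_enorm_toReal (by simpa using hr) ENNReal.ofReal_ne_top,
    ENNReal.toReal_ofReal hr.le]
  gcongr with x
  exact enorm_integral_le_lintegral_enorm _

theorem ofReal_integral_sq_norm_snd_mul {X Y : Type*} [MeasurableSpace X] [NormedAddCommGroup Y]
    [MeasurableSpace Y] {μ : Measure (X × Y)} {f : X × Y → ℝ} (hf : ∀ z, 0 ≤ f z)
    (hint : Integrable (fun z => ‖z.2‖ ^ 2 * f z) μ) :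
    ENNReal.ofReal (∫ z, ‖z.2‖ ^ 2 * f z ∂μ) = ∫⁻ z, ‖z.2‖ₑ ^ 2 * ‖f z‖ₑ ∂μ := by
  have hnonneg (z : X × Y) : 0 ≤ ‖z.2‖ ^ 2 * f z := mul_nonneg (by positivity) (hf z)
  rw [ofReal_integral_eq_lintegral_ofReal hint (.of_forall hnonneg)]
  congr 1 with z
  rw [← Real.enorm_eq_ofReal (hnonneg z), enorm_mul, enorm_pow, enorm_norm]

theorem setLIntegral_le_lintegral_rpow_mul_measure_rpow {α : Type*} [MeasurableSpace α]
    (μ : Measure α) {p q : ℝ} (hpq : p.HolderConjugate q) {h : α → ℝ≥0∞}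
    (hh : AEMeasurable h μ) (s : Set α) :
    ∫⁻ x in s, h x ∂μ ≤ (∫⁻ x, h x ^ p ∂μ) ^ (1 / p) * μ s ^ (1 / q) :=
  calc ∫⁻ x in s, h x ∂μ = ∫⁻ x in s, h x * 1 ∂μ := by simp only [mul_one]
    _ ≤ (∫⁻ x in s, h x ^ p ∂μ) ^ (1 / p) * (∫⁻ _ in s, 1 ^ q ∂μ) ^ (1 / q) :=
      ENNReal.lintegral_mul_le_Lp_mul_Lq _ hpq hh.restrict aemeasurable_const
    _ ≤ (∫⁻ x, h x ^ p ∂μ) ^ (1 / p) * μ s ^ (1 / q) := by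
      have hp := hpq.pos
      simp only [ENNReal.one_rpow, setLIntegral_const, one_mul]
      gcongr
      exact Measure.restrict_le_self

section Ball

variable {E : Type*} [NormedAddCommGroup E] [MeasurableSpace E] [OpensMeasurableSpace E]

theorem setLIntegral_compl_ball_le (μ : Measure E) (h : E → ℝ≥0∞) {R : ℝ≥0} (hR : 0 < R) :
    ∫⁻ v in (ball 0 R)ᶜ, h v ∂μ ≤ (∫⁻ v, ‖v‖ₑ ^ 2 * h v ∂μ) / (R : ℝ≥0∞) ^ 2 := by
  rw [ENNReal.le_div_iff_mul_le (.inl (by positivity)) (.inl (by simp)),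
    ← lintegral_mul_const' _ _ (by simp)]
  calc ∫⁻ v in (ball 0 R)ᶜ, h v * (R : ℝ≥0∞) ^ 2 ∂μ
      ≤ ∫⁻ v in (ball 0 R)ᶜ, ‖v‖ₑ ^ 2 * h v ∂μ := by
        refine setLIntegral_mono' measurableSet_ball.compl fun v hv => ?_
        have hRv : (R : ℝ≥0∞) ≤ ‖v‖ₑ := by
          simpa [enorm_eq_nnnorm, ← NNReal.coe_le_coe] using hv
        rw [mul_comm]
        gcongr
    _ ≤ ∫⁻ v, ‖v‖ₑ ^ 2 * h v ∂μ := setLIntegral_le_lintegral _ _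

theorem lintegral_le_of_ball_split (μ : Measure E) {p q : ℝ} (hpq : p.HolderConjugate q)
    {h : E → ℝ≥0∞} (hh : AEMeasurable h μ) {R : ℝ≥0} (hR : 0 < R) :
    ∫⁻ v, h v ∂μ ≤ (∫⁻ v, h v ^ p ∂μ) ^ (1 / p) * μ (ball 0 R) ^ (1 / q) +
      (∫⁻ v, ‖v‖ₑ ^ 2 * h v ∂μ) / (R : ℝ≥0∞) ^ 2 := by
  rw [← lintegral_add_compl h measurableSet_ball]
  exact add_le_add (setLIntegral_le_lintegral_rpow_mul_measure_rpow μ hpq hh _)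
    (setLIntegral_compl_ball_le μ h hR)

end Ball

section Velocity

variable {E : Type*} [NormedAddCommGroup E] [NormedSpace ℝ E] [FiniteDimensional ℝ E]
  [MeasurableSpace E] [BorelSpace E]

theorem lintegral_le_interpolation_Lp_moment (μ : Measure E) [μ.IsAddHaarMeasure] {N : ℕ}
    (hN : finrank ℝ E = N) (hN0 : 0 < N) {p q : ℝ} (hpq : p.HolderConjugate q)
    {h : E → ℝ≥0∞} (hh : AEMeasurable h μ) :
    ∫⁻ v, h v ∂μ ≤ (1 + μ (ball 0 1) ^ (1 / q)) * ((∫⁻ v, h v ^ p ∂μ) ^ (1 / p)) ^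
      (2 * q / (N + 2 * q)) * (∫⁻ v, ‖v‖ₑ ^ 2 * h v ∂μ) ^ ((N : ℝ) / (N + 2 * q)) := by
  have : Nontrivial E := Module.nontrivial_of_finrank_pos (R := ℝ) (hN ▸ hN0)
  have hp : 0 < p := hpq.pos
  have hq : 0 < q := hpq.symm.pos
  have hα : 0 < 2 * q / (N + 2 * q) := by positivity
  have hβ : 0 < (N : ℝ) / (N + 2 * q) := by positivity
  set G := (∫⁻ v, h v ^ p ∂μ) ^ (1 / p) with hG
  set K := ∫⁻ v, ‖v‖ₑ ^ 2 * h v ∂μ with hK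
  by_cases hG0 : G = 0
  · have : h =ᵐ[μ] 0 := by
      refine ENNReal.ae_eq_zero_of_lintegral_rpow_eq_zero hp.le hh ?_
      simpa [hG, ENNReal.rpow_eq_zero_iff, hp, not_lt.2 hp.le] using hG0
    simp [lintegral_congr_ae this]
  by_cases hK0 : K = 0
  · have : h =ᵐ[μ] 0 := by
      have hvh := (lintegral_eq_zero_iff' (by fun_prop)).1 hK0
      filter_upwards [hvh, Measure.ae_ne μ 0] with v hv hv0
      simpa [hv0] using hv
    simp [lintegral_congr_ae this]
  by_cases hGtop : G = ∞
  · simp [hGtop, ENNReal.top_rpow_of_pos hα, hK0, hβ.le]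
  by_cases hKtop : K = ∞
  · simp [hKtop, ENNReal.top_rpow_of_pos hβ, hG0, hα.le]
  have hα_eq : 2 / ((N : ℝ) / q + 2) = 2 * q / (N + 2 * q) := by field_simp
  have hβ_eq : (N : ℝ) / q / (N / q + 2) = N / (N + 2 * q) := by field_simp
  rw [← hα_eq, ← hβ_eq]
  refine ENNReal.le_mul_rpow_mul_rpow_of_forall_le (by positivity) two_pos hG0 hGtop hK0 hKtop
    fun R hR => ?_
  calc ∫⁻ v, h v ∂μ ≤ G * μ (ball 0 R) ^ (1 / q) + K / (R : ℝ≥0∞) ^ 2 :=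
        lintegral_le_of_ball_split μ hpq hh hR
    _ = G * (R : ℝ≥0∞) ^ ((N : ℝ) / q) * μ (ball 0 1) ^ (1 / q) + K / (R : ℝ≥0∞) ^ (2 : ℝ) := by
      rw [Measure.addHaar_ball μ 0 R.coe_nonneg, hN, ← NNReal.coe_pow, ENNReal.ofReal_coe_nnreal,
        ENNReal.mul_rpow_of_nonneg _ _ (by positivity), ENNReal.coe_pow,
        ← ENNReal.rpow_natCast_mul, ENNReal.rpow_two, mul_assoc, mul_one_div]

theorem lintegral_rpow_lintegral_le_interpolation_Lp_moment {X : Type*} [MeasurableSpace X]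
    (ν : Measure X) [SFinite ν] (μ : Measure E) [μ.IsAddHaarMeasure] {N : ℕ}
    (hN : finrank ℝ E = N) (hN0 : 0 < N) {p q : ℝ} (hpq : p.HolderConjugate q) {r : ℝ}
    (hr : r = (2 * p + N * (p - 1)) / (2 + N * (p - 1)))
    {F : X × E → ℝ≥0∞} (hF : AEMeasurable F (ν.prod μ)) :
    (∫⁻ x, (∫⁻ v, F (x, v) ∂μ) ^ r ∂ν) ^ (1 / r) ≤
      (1 + μ (ball 0 1) ^ (1 / q)) * ((∫⁻ z, F z ^ p ∂ν.prod μ) ^ (1 / p)) ^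
        (2 * q / (N + 2 * q)) * (∫⁻ z, ‖z.2‖ₑ ^ 2 * F z ∂ν.prod μ) ^ ((N : ℝ) / (N + 2 * q)) := by
  have hp : 1 < p := hpq.lt
  have hq : 0 < q := hpq.symm.pos
  have hr0 : 0 < r := by rw [hr]; positivity
  have hexp : 1 / p * (2 * q / (N + 2 * q)) * r + N / (N + 2 * q) * r = 1 := by
    have := hpq.sub_one_pos
    rw [hr, hpq.conjugate_eq]
    field_simp
    ring
  have hslice : ∀ᵐ x ∂ν, AEMeasurable (fun v => F (x, v)) μ :=
    (Measure.ae_ae_of_ae_prod hF.ae_eq_mk).mono fun x hx =>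
      ⟨fun v => hF.mk F (x, v), hF.measurable_mk.comp measurable_prodMk_left, hx⟩
  have hK : AEMeasurable (fun z : X × E => ‖z.2‖ₑ ^ 2 * F z) (ν.prod μ) := by fun_prop
  have key := lintegral_rpow_le_of_ae_le_mul_rpow_mul_rpow ν
    (hF.pow_const p).lintegral_prod_right' hK.lintegral_prod_right' _
    (by positivity) (by positivity) hr0 hexp
    (hslice.mono fun x hx => by
      simpa only [ENNReal.rpow_mul] using lintegral_le_interpolation_Lp_moment μ hN hN0 hpq hx)
  rwa [← lintegral_prod _ (hF.pow_const p), ← lintegral_prod _ hK, ENNReal.rpow_mul] at key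

end Velocity

/-- **Interpolation estimate for the macroscopic density** (Lemma 3.2 of Horst–Hunze).
For `f ∈ L^p(ℝ^N × ℝ^N)` nonnegative with finite kinetic energy, the density
`ρ(x) = ∫ f(x,v) dv` belongs to `L^r` with
`‖ρ‖_{L^r} ≤ (1 + (ω_N/N)^{1/p'}) ‖f‖_{L^p}^{2p'/(N+2p')} 𝒦(f)^{N/(N+2p')}`,
where `ω_N = N·vol(B(0,1))` is the surface area of the unit sphere in `ℝ^N`. -/
theorem density_Lr_estimate
    (N : ℕ) (hN : 2 ≤ N) (p q : ℝ) (hp : 1 < p) (hpq : 1 / p + 1 / q = 1)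
    (f : EuclideanSpace ℝ (Fin N) × EuclideanSpace ℝ (Fin N) → ℝ)
    (hf_nonneg : ∀ z, 0 ≤ f z)
    (hf_mem : MemLp f (ENNReal.ofReal p) volume)
    (hf_kin : Integrable (fun z => ‖z.2‖ ^ 2 * f z) volume)
    (ω : ℝ) (hω : ω = N * (volume (Metric.ball (0 : EuclideanSpace ℝ (Fin N)) 1)).toReal)
    (r : ℝ) (hr : r = (2 * p + N * (p - 1)) / (2 + N * (p - 1)))
    (ρ : EuclideanSpace ℝ (Fin N) → ℝ) (hρ : ∀ x, ρ x = ∫ v, f (x, v)) :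
    MemLp ρ (ENNReal.ofReal r) volume ∧
      eLpNorm ρ (ENNReal.ofReal r) volume ≤
        ENNReal.ofReal ((1 + (ω / N) ^ (1 / q)) *
          (eLpNorm f (ENNReal.ofReal p) volume).toReal ^ (2 * q / (N + 2 * q)) *
          (∫ z, ‖z.2‖ ^ 2 * f z) ^ ((N : ℝ) / (N + 2 * q))) := by
  have hpq' : p.HolderConjugate q :=
    Real.holderConjugate_iff.2 ⟨hp, by simpa only [one_div] using hpq⟩
  have hN0 : 0 < N := by omega
  have hq : 0 < q := hpq'.symm.pos
  have hr0 : 0 < r := by rw [hr]; positivity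
  have hρ_eq : ρ = fun x => ∫ v, f (x, v) := funext hρ
  rw [Measure.volume_eq_prod] at hf_mem hf_kin ⊢
  have hf_norm : eLpNorm f (ENNReal.ofReal p) (volume.prod volume) =
      (∫⁻ z, ‖f z‖ₑ ^ p ∂volume.prod volume) ^ (1 / p) := by
    rw [eLpNorm_eq_lintegral_rpow_enorm_toReal (by simpa using hpq'.pos) ENNReal.ofReal_ne_top,
      ENNReal.toReal_ofReal hpq'.nonneg]
  have hωN : ω / N = (volume (Metric.ball (0 : EuclideanSpace ℝ (Fin N)) 1)).toReal := by
    rw [hω, mul_div_cancel_left₀ _ (by positivity)]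
  have h𝒦0 : 0 ≤ ∫ z, ‖z.2‖ ^ 2 * f z ∂volume.prod volume :=
    integral_nonneg fun z => mul_nonneg (by positivity) (hf_nonneg z)
  refine ⟨⟨hρ_eq ▸ hf_mem.1.integral_prod_right',
    lt_of_le_of_lt ?bound ENNReal.ofReal_lt_top⟩, ?bound⟩
  rw [hωN, ENNReal.ofReal_mul (by positivity), ENNReal.ofReal_mul (by positivity),
    ENNReal.ofReal_add zero_le_one (by positivity), ENNReal.ofReal_one,
    ← ENNReal.ofReal_rpow_of_nonneg ENNReal.toReal_nonneg (by positivity),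
    ENNReal.ofReal_toReal measure_ball_lt_top.ne,
    ← ENNReal.ofReal_rpow_of_nonneg ENNReal.toReal_nonneg (by positivity),
    ENNReal.ofReal_toReal hf_mem.2.ne, ← ENNReal.ofReal_rpow_of_nonneg h𝒦0 (by positivity),
    hf_norm, ofReal_integral_sq_norm_snd_mul hf_nonneg hf_kin, hρ_eq]
  exact (eLpNorm_integral_prod_right_le _ _ f hr0).trans
    (lintegral_rpow_lintegral_le_interpolation_Lp_moment volume volume
      finrank_euclideanSpace_fin hN0 hpq' hr hf_mem.1.enorm)
end

section
/- Let κ > 0 and let Γ = (Γ_k)_{k∈ℤ³₀} ∈ ℓ²(ℤ³₀) be radially symmetric with ‖Γ‖_{ℓ²} = 1. Define the 3×3 matrix-valued function on the torus 𝕋³: Q(x) = 6κ Σ_{k∈ℤ³₀} Γ_k² (k⊗k)/|k|² e^{2πi k·x}. Then: (a) Q(0) = 2κ I₃; (b) |Q(x)| ≤ 6κ for all x ∈ 𝕋³; (c) ‖Q‖_{L²(𝕋³)} ≤ 6κ ‖Γ‖_{ℓ∞}; and (d) for every r ∈ [1,∞), ‖Q‖_{L^r(𝕋³)} ≤ 6κ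 ‖Γ‖_{ℓ∞}^{min(1, 2/r)}. In particular, if (Γ^N)_N is a sequence with ‖Γ^N‖_{ℓ²} = 1 for all N and ‖Γ^N‖_{ℓ∞} → 0, then ‖Q_N‖_{L^r(𝕋³)} → 0 for every r ∈ [1,∞). -/
open MeasureTheory Filter
open scoped ENNReal BigOperators Topology

/-- Nonzero lattice points of `ℤ³`. -/
abbrev Zlat3 : Type := {k : Fin 3 → ℤ // k ≠ 0}

/-- Squared Euclidean norm of a lattice point. -/
noncomputable def latNormSq (k : Fin 3 → ℤ) : ℝ := ∑ i, ((k i : ℝ)) ^ 2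

/-- The unit cube `[0,1)³`, a fundamental domain of the torus `𝕋³`. -/
noncomputable def cube3 : Set (Fin 3 → ℝ) := Set.univ.pi fun _ => Set.Ico 0 1

/-- The matrix-valued covariance function
`Q(x) = 6κ Σ_{k∈ℤ³₀} Γ_k² (k⊗k)/|k|² e^{2πi k·x}`, viewed as a map into
`ℂ^{3×3}` equipped with the (Frobenius) Euclidean norm. -/
noncomputable def Qcov (κ : ℝ) (Γ : Zlat3 → ℝ) (x : Fin 3 → ℝ) :
    EuclideanSpace ℂ (Fin 3 × Fin 3) :=
  WithLp.toLp 2 fun p : Fin 3 × Fin 3 => (6 * κ : ℂ) * ∑' k : Zlat3,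
    (((Γ k) ^ 2 * ((k.1 p.1 : ℝ) * (k.1 p.2 : ℝ)) / latNormSq k.1 : ℝ) : ℂ) *
      Complex.exp (2 * Real.pi * Complex.I * (∑ i, (k.1 i : ℝ) * x i))

open scoped ComplexConjugate InnerProductSpace

/-!
Write `Q(x) = 6κ ∑ₖ eₖ(x) Aₖ` with `eₖ(x) = e^{2πi k·x}` and `Aₖ = Γₖ² (k⊗k)/|k|²`, a matrix of
Frobenius norm `Γₖ²`. The triangle inequality gives `|Q| ≤ 6κ ∑ Γₖ² = 6κ`, and orthonormality of
the `eₖ` on the cube (Parseval) gives `‖Q‖²_{L²} = 36κ² ∑ Γₖ⁴ ≤ 36κ² ‖Γ‖²_{ℓ∞}`. Since the cube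
has measure one, `L^r` for `r ≤ 2` is controlled by `L²`; for `r ≥ 2` interpolate between the
`L^∞` and `L²` bounds via `|Q|^r ≤ (6κ)^{r-2} |Q|²`.

At `x = 0`, `Q(0)` is `6κ` times the second-moment matrix of the weights `Γₖ²/|k|²`. Radial
symmetry makes this matrix invariant under reflecting one coordinate of `k` (so the off-diagonal
entries vanish) and under swapping two coordinates (so the diagonal entries agree), and its trace
is `∑ Γₖ² = 1`; hence `Q(0) = 6κ · (1/3) I₃`.
-/

theorem inner_tsum_tsum {ι E : Type*} [NormedAddCommGroup E] [InnerProductSpace ℂ E]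
    [CompleteSpace E] {u v : ι → E} (hu : Summable fun k => ‖u k‖)
    (hv : Summable fun k => ‖v k‖) :
    ⟪∑' k, u k, ∑' k, v k⟫_ℂ = ∑' z : ι × ι, ⟪u z.1, v z.2⟫_ℂ := by
  have hprod : Summable fun z : ι × ι => ⟪u z.1, v z.2⟫_ℂ :=
    .of_norm_bounded (hu.mul_of_nonneg hv (fun _ => norm_nonneg _) fun _ => norm_nonneg _)
      fun z => norm_inner_le_norm _ _
  rw [hprod.tsum_prod' hprod.prod_factor]
  calc ⟪∑' k, u k, ∑' k, v k⟫_ℂ = innerSLFlip ℂ (∑' k, v k) (∑' k, u k) := rfl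
    _ = ∑' k, ⟪u k, ∑' k', v k'⟫_ℂ := (innerSLFlip ℂ _).map_tsum hu.of_norm
    _ = ∑' k, ∑' k', ⟪u k, v k'⟫_ℂ :=
      tsum_congr fun k => (innerSL ℂ (u k)).map_tsum hv.of_norm

theorem tsum_prod_ite_eq_diag {ι α : Type*} [DecidableEq ι] [AddCommMonoid α]
    [TopologicalSpace α] (f : ι → ι → α) :
    ∑' z : ι × ι, (if z.1 = z.2 then f z.1 z.2 else 0) = ∑' k, f k k := by
  rw [← Function.Injective.tsum_eq (g := fun k : ι => (k, k)) (fun _ _ h => congrArg Prod.fst h)]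
  · simp
  · intro z hz
    by_cases h : z.1 = z.2
    · exact ⟨z.1, Prod.ext rfl h⟩
    · simp [h] at hz

section Parseval

variable {X ι : Type*} [MeasurableSpace X] {μ : Measure X} [IsFiniteMeasure μ] [Countable ι]

theorem integral_tsum_of_norm_le {G : Type*} [NormedAddCommGroup G] [NormedSpace ℝ G]
    {F : ι → X → G} (hF : ∀ i, AEStronglyMeasurable (F i) μ) {b : ι → ℝ} (hb : Summable b)
    (hFb : ∀ i x, ‖F i x‖ ≤ b i) :
    ∫ x, ∑' i, F i x ∂μ = ∑' i, ∫ x, F i x ∂μ := by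
  refine (integral_tsum_of_summable_integral_norm
    (fun i => Integrable.of_bound (hF i) (b i) (.of_forall (hFb i))) ?_).symm
  refine (hb.mul_right (μ.real Set.univ)).of_nonneg_of_le
    (fun i => integral_nonneg fun _ => norm_nonneg _) fun i => (le_abs_self _).trans ?_
  simpa using norm_integral_le_of_norm_le_const (μ := μ) (f := fun x => ‖F i x‖)
    (.of_forall fun x => by simpa using hFb i x)

theorem integral_norm_tsum_smul_sq {E : Type*} [NormedAddCommGroup E] [InnerProductSpace ℂ E]
    [CompleteSpace E] [DecidableEq ι] {e : ι → X → ℂ} (he : ∀ k, AEStronglyMeasurable (e k) μ)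
    (he_le : ∀ k x, ‖e k x‖ ≤ 1)
    (horth : ∀ k k', ∫ x, conj (e k x) * e k' x ∂μ = if k = k' then 1 else 0)
    {c : ι → E} (hc : Summable fun k => ‖c k‖) :
    ∫ x, ‖∑' k, e k x • c k‖ ^ 2 ∂μ = ∑' k, ‖c k‖ ^ 2 := by
  have hsum : ∀ x, Summable fun k => ‖e k x • c k‖ := fun x =>
    hc.of_nonneg_of_le (fun _ => norm_nonneg _) fun k => by
      rw [norm_smul]; exact mul_le_of_le_one_left (norm_nonneg _) (he_le k x)
  have hexpand : ∀ x, ((‖∑' k, e k x • c k‖ ^ 2 : ℝ) : ℂ) =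
      ∑' z : ι × ι, conj (e z.1 x) * e z.2 x * ⟪c z.1, c z.2⟫_ℂ := fun x => by
    calc ((‖∑' k, e k x • c k‖ ^ 2 : ℝ) : ℂ) = ⟪∑' k, e k x • c k, ∑' k, e k x • c k⟫_ℂ := by
          rw [inner_self_eq_norm_sq_to_K]; push_cast; rfl
      _ = _ := by
          rw [inner_tsum_tsum (hsum x) (hsum x)]
          simp only [inner_smul_left, inner_smul_right]
          exact tsum_congr fun z => by ring
  have hmeas : ∀ z : ι × ι, AEStronglyMeasurable
      (fun x => conj (e z.1 x) * e z.2 x * ⟪c z.1, c z.2⟫_ℂ) μ := fun z =>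
    ((Complex.continuous_conj.comp_aestronglyMeasurable (he z.1)).mul (he z.2)).mul_const _
  have hbound : ∀ (z : ι × ι) x, ‖conj (e z.1 x) * e z.2 x * ⟪c z.1, c z.2⟫_ℂ‖ ≤
      ‖c z.1‖ * ‖c z.2‖ := fun z x => by
    rw [norm_mul, norm_mul, RCLike.norm_conj]
    calc ‖e z.1 x‖ * ‖e z.2 x‖ * ‖⟪c z.1, c z.2⟫_ℂ‖ ≤ 1 * 1 * (‖c z.1‖ * ‖c z.2‖) := by
          gcongr
          exacts [he_le _ _, he_le _ _, norm_inner_le_norm _ _]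
      _ = _ := by ring
  apply Complex.ofReal_injective
  rw [← integral_complex_ofReal, Complex.ofReal_tsum]
  simp_rw [hexpand]
  rw [integral_tsum_of_norm_le hmeas
    (hc.mul_of_nonneg hc (fun _ => norm_nonneg _) fun _ => norm_nonneg _) hbound]
  simp_rw [integral_mul_const, horth, ite_mul, one_mul, zero_mul]
  rw [tsum_prod_ite_eq_diag fun k k' => ⟪c k, c k'⟫_ℂ]
  simp_rw [inner_self_eq_norm_sq_to_K]
  norm_cast

end Parseval

theorem eLpNorm_le_rpow_mul_eLpNorm_rpow {X E : Type*} [MeasurableSpace X] {μ : Measure X}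
    [NormedAddCommGroup E] {f : X → E} {A : ℝ} (hf : ∀ x, ‖f x‖ ≤ A) {p q : ℝ} (hp : 0 < p)
    (hpq : p ≤ q) :
    eLpNorm f (ENNReal.ofReal q) μ ≤
      ENNReal.ofReal A ^ (1 - p / q) * eLpNorm f (ENNReal.ofReal p) μ ^ (p / q) := by
  have hq : 0 < q := hp.trans_le hpq
  set a := ENNReal.ofReal A
  have hpoint : ∀ x, ‖f x‖ₑ ^ q ≤ a ^ (q - p) * ‖f x‖ₑ ^ p := fun x => by
    calc ‖f x‖ₑ ^ q = ‖f x‖ₑ ^ (q - p) * ‖f x‖ₑ ^ p := by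
          rw [← ENNReal.rpow_add_of_nonneg _ _ (sub_nonneg.2 hpq) hp.le, sub_add_cancel]
      _ ≤ a ^ (q - p) * ‖f x‖ₑ ^ p := by
          gcongr
          exact (ofReal_norm (f x)).symm.trans_le (ENNReal.ofReal_le_ofReal (hf x))
  rw [eLpNorm_eq_eLpNorm' (by simpa using hq) ENNReal.ofReal_ne_top,
    eLpNorm_eq_eLpNorm' (by simpa using hp) ENNReal.ofReal_ne_top, eLpNorm', eLpNorm',
    ENNReal.toReal_ofReal hq.le, ENNReal.toReal_ofReal hp.le]
  calc (∫⁻ x, ‖f x‖ₑ ^ q ∂μ) ^ (1 / q)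
      ≤ (a ^ (q - p) * ∫⁻ x, ‖f x‖ₑ ^ p ∂μ) ^ (1 / q) := by
        gcongr
        exact (lintegral_mono hpoint).trans_eq (lintegral_const_mul' _ _
          (ENNReal.rpow_ne_top_of_nonneg (sub_nonneg.2 hpq) ENNReal.ofReal_ne_top))
    _ = a ^ (1 - p / q) * ((∫⁻ x, ‖f x‖ₑ ^ p ∂μ) ^ (1 / p)) ^ (p / q) := by
        rw [ENNReal.mul_rpow_of_nonneg _ _ (by positivity), ← ENNReal.rpow_mul,
          ← ENNReal.rpow_mul]
        congr 2 <;> field_simp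

theorem MeasureTheory.MemLp.eLpNorm_two_eq_sqrt_integral {X E : Type*} [MeasurableSpace X]
    {μ : Measure X} [NormedAddCommGroup E] {f : X → E} (hf : MemLp f 2 μ) :
    eLpNorm f 2 μ = ENNReal.ofReal √(∫ x, ‖f x‖ ^ 2 ∂μ) := by
  rw [hf.eLpNorm_eq_integral_rpow_norm two_ne_zero ENNReal.ofNat_ne_top, Real.sqrt_eq_rpow]
  simp

theorem abs_le_one_of_tsum_sq_eq_one {ι : Type*} {a : ι → ℝ} (ha : Summable fun k => a k ^ 2)
    (ha1 : ∑' k, a k ^ 2 = 1) (k : ι) : |a k| ≤ 1 :=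
  sq_le_one_iff_abs_le_one _ |>.1 (ha1 ▸ ha.le_tsum k fun _ _ => sq_nonneg _)

theorem tsum_sq_sq_le_iSup_abs_sq_mul {ι : Type*} {a : ι → ℝ} (ha : Summable fun k => a k ^ 2)
    (hbdd : BddAbove (Set.range fun k => |a k|)) :
    ∑' k, (a k ^ 2) ^ 2 ≤ (⨆ k, |a k|) ^ 2 * ∑' k, a k ^ 2 := by
  have hle : ∀ k, (a k ^ 2) ^ 2 ≤ (⨆ k, |a k|) ^ 2 * a k ^ 2 := fun k => by
    rw [sq (a k ^ 2), ← sq_abs (a k)]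
    gcongr
    exact le_ciSup hbdd k
  rw [← tsum_mul_left]
  exact Summable.tsum_le_tsum hle ((ha.mul_left _).of_nonneg_of_le (fun _ => by positivity) hle)
    (ha.mul_left _)

noncomputable def torusChar (k : Fin 3 → ℤ) (x : Fin 3 → ℝ) : ℂ :=
  Complex.exp (2 * Real.pi * Complex.I * (∑ i, (k i : ℝ) * x i))

theorem norm_torusChar (k : Fin 3 → ℤ) (x : Fin 3 → ℝ) : ‖torusChar k x‖ = 1 := by
  rw [torusChar, show 2 * Real.pi * Complex.I * (∑ i, (k i : ℝ) * x i) =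
    ((2 * Real.pi * ∑ i, (k i : ℝ) * x i : ℝ) : ℂ) * Complex.I by push_cast; ring]
  exact Complex.norm_exp_ofReal_mul_I _

theorem continuous_torusChar (k : Fin 3 → ℤ) : Continuous (torusChar k) := by
  unfold torusChar
  fun_prop

theorem conj_torusChar_mul (k k' : Fin 3 → ℤ) (x : Fin 3 → ℝ) :
    conj (torusChar k x) * torusChar k' x = torusChar (k' - k) x := by
  simp only [torusChar, ← Complex.exp_conj, ← Complex.exp_add, map_mul, Complex.conj_ofReal,
    Complex.conj_I, map_ofNat]
  congr 1
  simp only [Pi.sub_apply, Int.cast_sub, sub_mul, Finset.sum_sub_distrib]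
  push_cast
  ring

theorem torusChar_eq_prod (k : Fin 3 → ℤ) (x : Fin 3 → ℝ) :
    torusChar k x = ∏ i, Complex.exp (2 * Real.pi * Complex.I * k i * x i) := by
  rw [torusChar, ← Complex.exp_sum]
  push_cast
  rw [Finset.mul_sum]
  simp only [mul_assoc]

theorem integral_Ico_exp_two_pi_I_mul (m : ℤ) :
    ∫ t in Set.Ico (0 : ℝ) 1, Complex.exp (2 * Real.pi * Complex.I * m * t) =
      if m = 0 then 1 else 0 := by
  rw [integral_Ico_eq_integral_Ioo, ← integral_Ioc_eq_integral_Ioo,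
    ← intervalIntegral.integral_of_le zero_le_one]
  split_ifs with hm
  · simp [hm]
  · have hc : 2 * Real.pi * Complex.I * m ≠ 0 := by simp [Real.pi_ne_zero, hm]
    rw [integral_exp_mul_complex hc, Complex.ofReal_one, mul_one,
      show 2 * Real.pi * Complex.I * m = m * (2 * Real.pi * Complex.I) by ring,
      Complex.exp_int_mul_two_pi_mul_I]
    simp

theorem volume_restrict_cube3 :
    volume.restrict cube3 = Measure.pi fun _ => volume.restrict (Set.Ico (0 : ℝ) 1) := by
  rw [cube3, volume_pi, Measure.restrict_pi_pi]

instance : IsProbabilityMeasure (volume.restrict cube3) := by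
  rw [volume_restrict_cube3]
  have : IsProbabilityMeasure (volume.restrict (Set.Ico (0 : ℝ) 1)) := ⟨by simp⟩
  infer_instance

theorem integral_cube3_torusChar (m : Fin 3 → ℤ) :
    ∫ x in cube3, torusChar m x = if m = 0 then 1 else 0 := by
  simp_rw [volume_restrict_cube3, torusChar_eq_prod]
  rw [integral_fintype_prod_eq_prod fun i (t : ℝ) =>
    Complex.exp (2 * Real.pi * Complex.I * m i * t)]
  simp_rw [integral_Ico_exp_two_pi_I_mul, Finset.prod_boole, funext_iff]
  simp

theorem integral_cube3_conj_torusChar_mul (k k' : Fin 3 → ℤ) :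
    ∫ x in cube3, conj (torusChar k x) * torusChar k' x = if k = k' then 1 else 0 := by
  simp_rw [conj_torusChar_mul, integral_cube3_torusChar, sub_eq_zero, eq_comm]

theorem sq_le_latNormSq (k : Fin 3 → ℤ) (i : Fin 3) : (k i : ℝ) ^ 2 ≤ latNormSq k :=
  Finset.single_le_sum (f := fun j => (k j : ℝ) ^ 2) (fun _ _ => sq_nonneg _) (Finset.mem_univ i)

theorem latNormSq_pos (k : Zlat3) : 0 < latNormSq k.1 := by
  obtain ⟨i, hi⟩ := Function.ne_iff.1 k.2
  have hi' : (k.1 i : ℝ) ≠ 0 := by exact_mod_cast hi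
  exact (pow_pos (abs_pos.2 hi') 2).trans_le ((sq_abs _).trans_le (sq_le_latNormSq k.1 i))

theorem sum_sq_mul_sq_eq_latNormSq_sq (k : Fin 3 → ℤ) :
    ∑ p : Fin 3 × Fin 3, (k p.1 : ℝ) ^ 2 * (k p.2 : ℝ) ^ 2 = latNormSq k ^ 2 := by
  rw [latNormSq, sq (∑ i, _), Finset.sum_mul_sum, ← Finset.univ_product_univ, Finset.sum_product]

noncomputable def covCoeff (Γ : Zlat3 → ℝ) (k : Zlat3) : EuclideanSpace ℂ (Fin 3 × Fin 3) :=
  WithLp.toLp 2 fun p => ((Γ k ^ 2 * ((k.1 p.1 : ℝ) * (k.1 p.2 : ℝ)) / latNormSq k.1 : ℝ) : ℂ)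

theorem norm_covCoeff (Γ : Zlat3 → ℝ) (k : Zlat3) : ‖covCoeff Γ k‖ = Γ k ^ 2 := by
  have hk := (latNormSq_pos k).ne'
  rw [EuclideanSpace.norm_eq, ← Real.sqrt_sq (sq_nonneg (Γ k))]
  congr 1
  simp only [covCoeff, Complex.norm_real, Real.norm_eq_abs, sq_abs, div_pow, mul_pow,
    ← Finset.sum_div, ← Finset.mul_sum]
  rw [sum_sq_mul_sq_eq_latNormSq_sq]
  field_simp

section Covariance

variable {Γ : Zlat3 → ℝ}

theorem summable_norm_torusChar_smul_covCoeff (hΓ : Summable fun k => Γ k ^ 2)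
    (x : Fin 3 → ℝ) : Summable fun k => ‖torusChar k.1 x • covCoeff Γ k‖ := by
  simpa [norm_smul, norm_torusChar, norm_covCoeff] using hΓ

theorem Qcov_eq_smul_tsum (hΓ : Summable fun k => Γ k ^ 2) (κ : ℝ) (x : Fin 3 → ℝ) :
    Qcov κ Γ x = ((6 * κ : ℝ) : ℂ) • ∑' k, torusChar k.1 x • covCoeff Γ k := by
  ext p
  rw [PiLp.smul_apply, show (∑' k, torusChar k.1 x • covCoeff Γ k) p =
    EuclideanSpace.proj (𝕜 := ℂ) p (∑' k, torusChar k.1 x • covCoeff Γ k) from rfl,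
    (EuclideanSpace.proj p).map_tsum (summable_norm_torusChar_smul_covCoeff hΓ x).of_norm]
  simp [Qcov, covCoeff, torusChar, mul_comm]

theorem norm_Qcov_le (hΓ : Summable fun k => Γ k ^ 2) (hΓ1 : ∑' k, Γ k ^ 2 = 1) {κ : ℝ}
    (hκ : 0 ≤ κ) (x : Fin 3 → ℝ) : ‖Qcov κ Γ x‖ ≤ 6 * κ := by
  rw [Qcov_eq_smul_tsum hΓ, norm_smul, Complex.norm_real, Real.norm_of_nonneg (by positivity)]
  calc 6 * κ * ‖∑' k, torusChar k.1 x • covCoeff Γ k‖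
      ≤ 6 * κ * ∑' k, ‖torusChar k.1 x • covCoeff Γ k‖ := by
        gcongr; exact norm_tsum_le_tsum_norm (summable_norm_torusChar_smul_covCoeff hΓ x)
    _ = 6 * κ := by simp [norm_smul, norm_torusChar, norm_covCoeff, hΓ1]

theorem continuous_Qcov (hΓ : Summable fun k => Γ k ^ 2) (κ : ℝ) : Continuous (Qcov κ Γ) := by
  rw [show Qcov κ Γ = fun x => ((6 * κ : ℝ) : ℂ) • ∑' k, torusChar k.1 x • covCoeff Γ k from
    funext (Qcov_eq_smul_tsum hΓ κ)]
  have hterm : ∀ k : Zlat3, Continuous fun x => torusChar k.1 x • covCoeff Γ k := fun k =>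
    (continuous_torusChar k.1).smul continuous_const
  exact (continuous_tsum hterm hΓ fun k x => by
    simp [norm_smul, norm_torusChar, norm_covCoeff]).const_smul ((6 * κ : ℝ) : ℂ)

theorem integral_norm_Qcov_sq (hΓ : Summable fun k => Γ k ^ 2) (κ : ℝ) :
    ∫ x in cube3, ‖Qcov κ Γ x‖ ^ 2 = (6 * κ) ^ 2 * ∑' k, (Γ k ^ 2) ^ 2 := by
  have hmeas : ∀ k : Zlat3, AEStronglyMeasurable (torusChar k.1) (volume.restrict cube3) :=
    fun k => (continuous_torusChar k.1).aestronglyMeasurable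
  have horth : ∀ k k' : Zlat3, ∫ x in cube3, conj (torusChar k.1 x) * torusChar k'.1 x =
      if k = k' then 1 else 0 := fun k k' => by
    rw [integral_cube3_conj_torusChar_mul]
    exact if_congr Subtype.ext_iff.symm rfl rfl
  have hc : Summable fun k => ‖covCoeff Γ k‖ := by simpa [norm_covCoeff] using hΓ
  simp_rw [Qcov_eq_smul_tsum hΓ, norm_smul, mul_pow, Complex.norm_real, Real.norm_eq_abs, sq_abs]
  rw [integral_const_mul, integral_norm_tsum_smul_sq hmeas
    (fun k x => (norm_torusChar k.1 x).le) horth hc]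
  simp_rw [norm_covCoeff]
  ring

theorem eLpNorm_two_Qcov_le (hΓ : Summable fun k => Γ k ^ 2) (hΓ1 : ∑' k, Γ k ^ 2 = 1) {κ : ℝ}
    (hκ : 0 ≤ κ) :
    eLpNorm (Qcov κ Γ) 2 (volume.restrict cube3) ≤ ENNReal.ofReal (6 * κ * ⨆ k, |Γ k|) := by
  have hbdd : BddAbove (Set.range fun k => |Γ k|) :=
    ⟨1, Set.forall_mem_range.2 (abs_le_one_of_tsum_sq_eq_one hΓ hΓ1)⟩
  have hM : 0 ≤ ⨆ k, |Γ k| := Real.iSup_nonneg fun k => abs_nonneg _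
  have hLp : MemLp (Qcov κ Γ) 2 (volume.restrict cube3) :=
    .of_bound (continuous_Qcov hΓ κ).aestronglyMeasurable (6 * κ)
      (ae_of_all _ (norm_Qcov_le hΓ hΓ1 hκ))
  rw [hLp.eLpNorm_two_eq_sqrt_integral, integral_norm_Qcov_sq hΓ]
  refine ENNReal.ofReal_le_ofReal (Real.sqrt_le_iff.2 ⟨by positivity, ?_⟩)
  calc (6 * κ) ^ 2 * ∑' k, (Γ k ^ 2) ^ 2
      ≤ (6 * κ) ^ 2 * ((⨆ k, |Γ k|) ^ 2 * ∑' k, Γ k ^ 2) := by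
        gcongr; exact tsum_sq_sq_le_iSup_abs_sq_mul hΓ hbdd
    _ = (6 * κ * ⨆ k, |Γ k|) ^ 2 := by rw [hΓ1]; ring

theorem eLpNorm_Qcov_le (hΓ : Summable fun k => Γ k ^ 2) (hΓ1 : ∑' k, Γ k ^ 2 = 1) {κ : ℝ}
    (hκ : 0 ≤ κ) {r : ℝ} (hr : 1 ≤ r) :
    eLpNorm (Qcov κ Γ) (ENNReal.ofReal r) (volume.restrict cube3) ≤
      ENNReal.ofReal (6 * κ * (⨆ k, |Γ k|) ^ min 1 (2 / r)) := by
  set M := ⨆ k, |Γ k|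
  have hM : 0 ≤ M := Real.iSup_nonneg fun k => abs_nonneg _
  have hL2 := eLpNorm_two_Qcov_le hΓ hΓ1 hκ
  rcases le_total r 2 with hr2 | hr2
  · rw [min_eq_left ((one_le_div (by linarith)).2 hr2), Real.rpow_one]
    refine (eLpNorm_le_eLpNorm_of_exponent_le ?_
      (continuous_Qcov hΓ κ).aestronglyMeasurable).trans hL2
    simpa using ENNReal.ofReal_le_ofReal hr2
  · have h2r : 2 / r ≤ 1 := (div_le_one (by linarith)).2 hr2
    rw [min_eq_right h2r]
    calc eLpNorm (Qcov κ Γ) (ENNReal.ofReal r) (volume.restrict cube3)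
        ≤ ENNReal.ofReal (6 * κ) ^ (1 - 2 / r) *
            eLpNorm (Qcov κ Γ) (ENNReal.ofReal 2) (volume.restrict cube3) ^ (2 / r) :=
          eLpNorm_le_rpow_mul_eLpNorm_rpow (norm_Qcov_le hΓ hΓ1 hκ) two_pos hr2
      _ ≤ ENNReal.ofReal (6 * κ) ^ (1 - 2 / r) * ENNReal.ofReal (6 * κ * M) ^ (2 / r) := by
          rw [ENNReal.ofReal_ofNat]; gcongr
      _ = ENNReal.ofReal (6 * κ * M ^ (2 / r)) := by
          rw [ENNReal.ofReal_rpow_of_nonneg (by positivity) (sub_nonneg.2 h2r),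
            ENNReal.ofReal_rpow_of_nonneg (by positivity) (by positivity),
            ← ENNReal.ofReal_mul (by positivity), Real.mul_rpow (by positivity) hM, ← mul_assoc,
            ← Real.rpow_add' (by positivity) (by simp), sub_add_cancel, Real.rpow_one]

end Covariance

def Zlat3.permOfMapZero (e : Equiv.Perm (Fin 3 → ℤ)) (he : e 0 = 0) : Zlat3 ≃ Zlat3 :=
  e.subtypeEquiv fun _ => (e.injective.ne_iff' he).symm

def coordReflection (i : Fin 3) : Equiv.Perm (Fin 3 → ℤ) :=
  Function.Involutive.toPerm (fun k => Function.update k i (-k i)) fun k => by simp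

@[simp]
theorem coordReflection_apply (i : Fin 3) (k : Fin 3 → ℤ) :
    coordReflection i k = Function.update k i (-k i) :=
  rfl

theorem latNormSq_coordReflection (i : Fin 3) (k : Fin 3 → ℤ) :
    latNormSq (coordReflection i k) = latNormSq k := by
  refine Finset.sum_congr rfl fun j _ => ?_
  by_cases hj : j = i
  · subst hj; simp
  · simp [hj]

theorem latNormSq_arrowCongr (τ : Equiv.Perm (Fin 3)) (k : Fin 3 → ℤ) :
    latNormSq (τ.arrowCongr (Equiv.refl ℤ) k) = latNormSq k :=
  τ.symm.sum_comp fun j => (k j : ℝ) ^ 2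

noncomputable def secondMoment (Γ : Zlat3 → ℝ) (i j : Fin 3) : ℝ :=
  ∑' k : Zlat3, Γ k ^ 2 * ((k.1 i : ℝ) * (k.1 j : ℝ)) / latNormSq k.1

theorem Qcov_zero_apply (κ : ℝ) (Γ : Zlat3 → ℝ) (p : Fin 3 × Fin 3) :
    Qcov κ Γ 0 p = ((6 * κ * secondMoment Γ p.1 p.2 : ℝ) : ℂ) := by
  simp [Qcov, secondMoment, Complex.ofReal_tsum]

theorem sum_secondMoment_self {Γ : Zlat3 → ℝ} (hΓ : Summable fun k => Γ k ^ 2) :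
    ∑ i, secondMoment Γ i i = ∑' k, Γ k ^ 2 := by
  have hsum (i : Fin 3) :
      Summable fun k : Zlat3 => Γ k ^ 2 * ((k.1 i : ℝ) * (k.1 i : ℝ)) / latNormSq k.1 := by
    simp only [← sq]
    exact hΓ.of_nonneg_of_le (fun k => div_nonneg (by positivity) (latNormSq_pos k).le)
      fun k => (div_le_iff₀ (latNormSq_pos k)).2
        (mul_le_mul_of_nonneg_left (sq_le_latNormSq k.1 i) (sq_nonneg _))
  simp only [secondMoment]
  rw [← Summable.tsum_finsetSum fun i _ => hsum i]
  refine tsum_congr fun k => ?_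
  rw [← Finset.sum_div, ← Finset.mul_sum]
  simp only [← sq]
  exact mul_div_cancel_right₀ _ (latNormSq_pos k).ne'

section SecondMoment

variable {Γ : Zlat3 → ℝ} (hrad : ∀ k k' : Zlat3, latNormSq k.1 = latNormSq k'.1 → Γ k = Γ k')
include hrad

theorem tsum_radial_comp_eq (e : Zlat3 ≃ Zlat3) (he : ∀ k, latNormSq (e k).1 = latNormSq k.1)
    (φ : (Fin 3 → ℤ) → ℝ) :
    ∑' k, Γ k ^ 2 * φ (e k).1 / latNormSq k.1 = ∑' k, Γ k ^ 2 * φ k.1 / latNormSq k.1 := by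
  rw [← e.tsum_eq fun k => Γ k ^ 2 * φ k.1 / latNormSq k.1]
  exact tsum_congr fun k => by rw [hrad (e k) k (he k), he k]

theorem secondMoment_of_ne {i j : Fin 3} (hij : i ≠ j) : secondMoment Γ i j = 0 := by
  have h := tsum_radial_comp_eq hrad (Zlat3.permOfMapZero (coordReflection i) (by simp))
    (fun k => latNormSq_coordReflection i k.1) fun k => (k i : ℝ) * (k j : ℝ)
  simp only [Zlat3.permOfMapZero, coordReflection_apply, Equiv.subtypeEquiv_apply,
    Function.update_self, Function.update_of_ne hij.symm, Int.cast_neg, neg_mul,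
    mul_neg, neg_div, tsum_neg] at h
  rw [secondMoment]
  linarith

theorem secondMoment_self_eq (i j : Fin 3) : secondMoment Γ i i = secondMoment Γ j j := by
  have h := tsum_radial_comp_eq hrad
    (Zlat3.permOfMapZero ((Equiv.swap i j).arrowCongr (Equiv.refl ℤ)) rfl)
    (fun k => latNormSq_arrowCongr _ k.1) fun k => (k i : ℝ) * (k i : ℝ)
  simpa [Zlat3.permOfMapZero, secondMoment] using h.symm

theorem secondMoment_self (hΓ : Summable fun k => Γ k ^ 2) (hΓ1 : ∑' k, Γ k ^ 2 = 1)
    (i : Fin 3) : secondMoment Γ i i = 1 / 3 := by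
  have h := sum_secondMoment_self hΓ
  rw [hΓ1, Fin.sum_univ_three, secondMoment_self_eq hrad 0 i, secondMoment_self_eq hrad 1 i,
    secondMoment_self_eq hrad 2 i] at h
  linarith

end SecondMoment

/-- **Properties of the covariance function of the noise** (Example 2.4 of the paper).
For radially symmetric `Γ ∈ ℓ²(ℤ³₀)` with `‖Γ‖_{ℓ²} = 1`:
(a) `Q(0) = 2κ I₃`; (b) `|Q(x)| ≤ 6κ`; (c) `‖Q‖_{L²(𝕋³)} ≤ 6κ ‖Γ‖_{ℓ∞}`;
(d) `‖Q‖_{L^r(𝕋³)} ≤ 6κ ‖Γ‖_{ℓ∞}^{min(1,2/r)}` for `r ∈ [1,∞)`; and in particular, for a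
sequence `Γ^N` with `‖Γ^N‖_{ℓ²} = 1` and `‖Γ^N‖_{ℓ∞} → 0`, `‖Q_N‖_{L^r(𝕋³)} → 0`. -/
theorem covariance_function_properties (κ : ℝ) (hκ : 0 < κ) :
    (∀ Γ : Zlat3 → ℝ,
      Summable (fun k => (Γ k) ^ 2) →
      (∑' k : Zlat3, (Γ k) ^ 2) = 1 →
      (∀ k k' : Zlat3, latNormSq k.1 = latNormSq k'.1 → Γ k = Γ k') →
      (∀ p : Fin 3 × Fin 3,
          Qcov κ Γ 0 p = if p.1 = p.2 then ((2 * κ : ℝ) : ℂ) else 0) ∧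
      (∀ x : Fin 3 → ℝ, ‖Qcov κ Γ x‖ ≤ 6 * κ) ∧
      eLpNorm (Qcov κ Γ) 2 (volume.restrict cube3) ≤
        ENNReal.ofReal (6 * κ * (⨆ k : Zlat3, |Γ k|)) ∧
      (∀ r : ℝ, 1 ≤ r →
        eLpNorm (Qcov κ Γ) (ENNReal.ofReal r) (volume.restrict cube3) ≤
          ENNReal.ofReal (6 * κ * (⨆ k : Zlat3, |Γ k|) ^ (min 1 (2 / r))))) ∧
    (∀ ΓN : ℕ → Zlat3 → ℝ,
      (∀ N, Summable (fun k => (ΓN N k) ^ 2)) →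
      (∀ N, (∑' k : Zlat3, (ΓN N k) ^ 2) = 1) →
      (∀ N, ∀ k k' : Zlat3, latNormSq k.1 = latNormSq k'.1 → ΓN N k = ΓN N k') →
      Tendsto (fun N => ⨆ k : Zlat3, |ΓN N k|) atTop (𝓝 0) →
      ∀ r : ℝ, 1 ≤ r →
        Tendsto (fun N => eLpNorm (Qcov κ (ΓN N)) (ENNReal.ofReal r) (volume.restrict cube3))
          atTop (𝓝 0)) := by
  refine ⟨fun Γ hΓ hΓ1 hrad => ⟨fun p => ?_, norm_Qcov_le hΓ hΓ1 hκ.le,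
    eLpNorm_two_Qcov_le hΓ hΓ1 hκ.le, fun r hr => eLpNorm_Qcov_le hΓ hΓ1 hκ.le hr⟩, ?_⟩
  · rw [Qcov_zero_apply]
    split_ifs with hp
    · rw [hp, secondMoment_self hrad hΓ hΓ1]
      push_cast
      ring
    · rw [secondMoment_of_ne hrad hp]
      simp
  · intro ΓN hΓN hΓN1 _ hsup r hr
    have hm : 0 < min 1 (2 / r) := lt_min one_pos (by positivity)
    have hbound : Tendsto (fun s : ℝ => ENNReal.ofReal (6 * κ * s ^ min 1 (2 / r))) (𝓝 0)
        (𝓝 0) := by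
      have hcont : Continuous fun s : ℝ => ENNReal.ofReal (6 * κ * s ^ min 1 (2 / r)) :=
        ENNReal.continuous_ofReal.comp (continuous_const.mul (Real.continuous_rpow_const hm.le))
      simpa [Real.zero_rpow hm.ne'] using hcont.tendsto 0
    exact tendsto_of_tendsto_of_tendsto_of_le_of_le tendsto_const_nhds (hbound.comp hsup)
      (fun _ => zero_le) fun N => eLpNorm_Qcov_le (hΓN N) (hΓN1 N) hκ.le hr
end

section
/- Let (Ω, ℱ, ℙ) be a probability space and let X : Ω → 𝕋³ be uniformly distributed, R : Ω → ℝ square-integrable with 𝔼[R²] = σ², and L : Ω → (0,∞) with probability density f on (0,∞), with X, R, L mutually independent. Let K ∈ L¹(𝕋³, ℝ³) and θ_ℓ ∈ L¹ ∩ L²(𝕋³) (measurable in (ℓ,x)), and define E(x) = R · (K ∗ θ_L)(x − X). Then for all bounded measurable φ, ψ : 𝕋³ → ℝ³ one has ⟨E, φ⟩ = R · (θ_L^T ∗ K^T ∗ φ)(X), and consequently 𝔼[⟨E, φ⟩ ⟨E, ψ⟩] = σ² ∫_0^∞ ∫_{𝕋³} (θ_ℓ^T ∗ K^T ∗ φ)(x)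 · (θ_ℓ^T ∗ K^T ∗ ψ)(x) dx f(ℓ) dℓ, provided the right-hand side is finite; here g^T(x) = g(−x) and for vector fields the convolution (K^T ∗ φ)(x) = ∫_{𝕋³} K(y−x)·φ(y) dy is scalar-valued. -/
open MeasureTheory ProbabilityTheory
open scoped BigOperators

/-- The three-dimensional torus `𝕋³ = (ℝ/ℤ)³` with its normalized Haar measure. -/
abbrev Torus3 : Type := Fin 3 → AddCircle (1 : ℝ)

/-- The scalar convolution `(K^T ∗ φ)(z) = ∫ K(u − z)·φ(u) du` on `𝕋³`. -/
noncomputable def convKT (K φ : Torus3 → Fin 3 → ℝ) (z : Torus3) : ℝ :=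
  ∫ u, ∑ i, K (u - z) i * φ u i

/-- The convolution `(θ_ℓ^T ∗ g)(z) = ∫ θ_ℓ(u − z) g(u) du` on `𝕋³`. -/
noncomputable def convThetaT (θ : ℝ → Torus3 → ℝ) (ℓ : ℝ) (g : Torus3 → ℝ) (z : Torus3) : ℝ :=
  ∫ u, θ ℓ (u - z) * g u

open scoped ENNReal

/-!
Part (i) is Fubini: `⟨E, φ⟩` is the integral of `θ_L(y) K(x - X - y)·φ(x)` over `(x, y)`, which
is absolutely integrable because `θ_L, K ∈ L¹` and `φ` is bounded; integrating in `x` first and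
translating by `X` gives `R (θ_L^T ∗ K^T ∗ φ)(X)`.

For (ii), part (i) writes `⟨E, φ⟩⟨E, ψ⟩ = R² H(L, X)` with `H` measurable. `R` is independent of
`(L, X)`, whose law is `f(ℓ) dℓ ⊗ dx`, so the expectation is `σ² ∫ H d(f(ℓ) dℓ ⊗ dx)`. As `f` is
not assumed measurable, it is replaced by a measurable `g ≤ f` with the same `withDensity`;
the defect `f - g` has zero lower integral, and this forces `f H = g H` almost everywhere
because `f H` is a.e.-measurable.
-/

section DensityProduct

variable {α β : Type*} [MeasurableSpace α] [MeasurableSpace β] {μ : Measure α} {ν : Measure β}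

theorem ae_eq_zero_of_abs_le_toReal_mul [IsFiniteMeasure ν] {w : α → ℝ≥0∞}
    (hw : ∫⁻ a, w a ∂μ = 0) {H : α × β → ℝ} (hH : AEMeasurable H (μ.prod ν))
    {F : α × β → ℝ} (hF : AEMeasurable F (μ.prod ν))
    (hFH : ∀ p, |F p| ≤ (w p.1).toReal * |H p|) : F =ᵐ[μ.prod ν] 0 := by
  set G : α × β → ℝ≥0∞ := fun p => ENNReal.ofReal (|F p| / (1 + |H p|))
  have hG : AEMeasurable G (μ.prod ν) := by fun_prop
  have hGw : ∀ p, G p ≤ w p.1 := fun p => by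
    refine (ENNReal.ofReal_le_ofReal ?_).trans ENNReal.ofReal_toReal_le
    rw [div_le_iff₀ (by positivity)]
    nlinarith [hFH p, abs_nonneg (H p), (w p.1).toReal_nonneg]
  have hG0 : ∫⁻ p, G p ∂μ.prod ν = 0 := by
    refine le_antisymm ?_ zero_le
    calc ∫⁻ p, G p ∂μ.prod ν = ∫⁻ a, ∫⁻ b, G (a, b) ∂ν ∂μ := lintegral_prod _ hG
      _ ≤ ∫⁻ a, w a * ν Set.univ ∂μ :=
          lintegral_mono fun a =>
            (lintegral_mono fun b => hGw (a, b)).trans_eq (lintegral_const (w a))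
      _ = 0 := by rw [lintegral_mul_const' _ _ (measure_ne_top _ _), hw, zero_mul]
  filter_upwards [(lintegral_eq_zero_iff' hG).1 hG0] with p hp
  have h : |F p| / (1 + |H p|) ≤ 0 := ENNReal.ofReal_eq_zero.1 hp
  rw [div_le_iff₀ (by positivity), zero_mul] at h
  exact abs_nonpos_iff.1 h

theorem integral_prod_withDensity_ofReal [SFinite μ] [IsFiniteMeasure ν] {f : α → ℝ}
    (hf : ∀ a, 0 ≤ f a) [IsFiniteMeasure (μ.withDensity fun a => ENNReal.ofReal (f a))]
    {H : α × β → ℝ} (hH : AEMeasurable H (μ.prod ν))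
    (hfH : Integrable (fun p => f p.1 * H p) (μ.prod ν)) :
    ∫ p, H p ∂(μ.withDensity fun a => ENNReal.ofReal (f a)).prod ν =
      ∫ a, f a * ∫ b, H (a, b) ∂ν ∂μ := by
  obtain ⟨g, hgm, hgf, hg_eq⟩ :=
    exists_measurable_le_withDensity_eq μ fun a => ENNReal.ofReal (f a)
  have hg_lintegral : ∫⁻ a, g a ∂μ = ∫⁻ a, ENNReal.ofReal (f a) ∂μ := by
    rw [← setLIntegral_univ, ← withDensity_apply _ MeasurableSet.univ, hg_eq,
      withDensity_apply' _ Set.univ, setLIntegral_univ]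
  have hg_fin : ∫⁻ a, g a ∂μ ≠ ∞ := by
    rw [← setLIntegral_univ, ← withDensity_apply _ MeasurableSet.univ, hg_eq]
    exact measure_ne_top _ _
  have hdefect : ∫⁻ a, ENNReal.ofReal (f a) - g a ∂μ = 0 := by
    rw [lintegral_sub' hgm.aemeasurable hg_fin (ae_of_all _ hgf), hg_lintegral, tsub_self]
  have hgH : (fun p => (g p.1).toReal * H p) =ᵐ[μ.prod ν] fun p => f p.1 * H p := by
    have h0 := ae_eq_zero_of_abs_le_toReal_mul hdefect hH
      (hfH.aemeasurable.sub ((hgm.comp measurable_fst).ennreal_toReal.aemeasurable.mul hH))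
      fun p => by
        simp only [Pi.sub_apply, Pi.mul_apply, Function.comp_apply]
        rw [← sub_mul, abs_mul, ENNReal.toReal_sub_of_le (hgf p.1) ENNReal.ofReal_ne_top,
          ENNReal.toReal_ofReal (hf p.1), abs_of_nonneg (sub_nonneg.2 ?_)]
        exact ENNReal.toReal_le_of_le_ofReal (hf p.1) (hgf p.1)
    filter_upwards [h0] with p hp
    exact (sub_eq_zero.1 hp).symm
  rw [← hg_eq, prod_withDensity_left hgm, integral_withDensity_eq_integral_toReal_smul
      (f := fun p : α × β => g p.1) (hgm.comp measurable_fst)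
      (ae_of_all _ fun p => (hgf p.1).trans_lt ENNReal.ofReal_lt_top)]
  simp only [smul_eq_mul]
  rw [integral_congr_ae hgH, integral_prod _ hfH]
  simp_rw [integral_const_mul]

end DensityProduct

theorem ProbabilityTheory.IndepFun.prodMk_right_of_indepFun_prodMk {Ω α β γ : Type*}
    [MeasurableSpace Ω] [MeasurableSpace α] [MeasurableSpace β] [MeasurableSpace γ]
    {P : Measure Ω} [IsFiniteMeasure P] {A : Ω → α} {B : Ω → β} {C : Ω → γ}
    (hA : Measurable A) (hB : Measurable B) (hC : Measurable C)
    (hAB : IndepFun A B P) (hCAB : IndepFun C (fun ω => (A ω, B ω)) P) :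
    IndepFun A (fun ω => (B ω, C ω)) P := by
  have hBC : IndepFun B C P := hCAB.symm.comp measurable_snd measurable_id
  have hlaw :
      P.map (fun ω => (C ω, (A ω, B ω))) = (P.map C).prod ((P.map A).prod (P.map B)) := by
    rw [(indepFun_iff_map_prod_eq_prod_map_map hC.aemeasurable
      (hA.prodMk hB).aemeasurable).1 hCAB, (indepFun_iff_map_prod_eq_prod_map_map
      hA.aemeasurable hB.aemeasurable).1 hAB]
  rw [indepFun_iff_map_prod_eq_prod_map_map hA.aemeasurable (hB.prodMk hC).aemeasurable,
    (indepFun_iff_map_prod_eq_prod_map_map hB.aemeasurable hC.aemeasurable).1 hBC]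
  let e : γ × (α × β) → α × (β × γ) := MeasurableEquiv.prodAssoc ∘ Prod.swap
  calc P.map (fun ω => (A ω, (B ω, C ω)))
      = (P.map (fun ω => (C ω, (A ω, B ω)))).map e := by
        rw [Measure.map_map (MeasurableEquiv.prodAssoc.measurable.comp measurable_swap)
          (hC.prodMk (hA.prodMk hB))]
        rfl
    _ = (P.map A).prod ((P.map B).prod (P.map C)) := by
        rw [hlaw, ← Measure.map_map MeasurableEquiv.prodAssoc.measurable measurable_swap,
          Measure.prod_swap, (measurePreserving_prodAssoc _ _ _).map_eq]

theorem convKT_congr_ae {K K' : Torus3 → Fin 3 → ℝ} (h : K =ᵐ[volume] K')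
    (φ : Torus3 → Fin 3 → ℝ) : convKT K φ = convKT K' φ := by
  funext z
  refine integral_congr_ae ?_
  filter_upwards [(measurePreserving_sub_right volume z).quasiMeasurePreserving.ae_eq_comp h]
    with u hu
  simp only [Function.comp_apply] at hu
  simp only [hu]

theorem measurable_convKT {K φ : Torus3 → Fin 3 → ℝ} (hK : AEStronglyMeasurable K volume)
    (hφ : Measurable φ) : Measurable (convKT K φ) := by
  rw [convKT_congr_ae hK.ae_eq_mk φ]
  have hK_mk := hK.stronglyMeasurable_mk.measurable
  have hintegrand : StronglyMeasurable fun q : Torus3 × Torus3 =>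
      ∑ i, hK.mk K (q.2 - q.1) i * φ q.2 i := by
    apply Measurable.stronglyMeasurable
    fun_prop
  exact hintegrand.integral_prod_right'.measurable

theorem measurable_convThetaT {θ : ℝ → Torus3 → ℝ} (hθ : Measurable (Function.uncurry θ))
    {g : Torus3 → ℝ} (hg : Measurable g) :
    Measurable fun p : ℝ × Torus3 => convThetaT θ p.1 g p.2 := by
  have hintegrand : StronglyMeasurable fun q : (ℝ × Torus3) × Torus3 =>
      θ q.1.1 (q.2 - q.1.2) * g q.2 := by
    apply Measurable.stronglyMeasurable
    exact (hθ.comp (measurable_fst.fst.prodMk (measurable_snd.sub measurable_fst.snd))).mul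
      (hg.comp measurable_snd)
  exact hintegrand.integral_prod_right'.measurable

theorem integral_convolution_dot_eq_integral_mul_convKT {θ₀ : Torus3 → ℝ}
    (hθ₀ : Integrable θ₀ volume) {K : Torus3 → Fin 3 → ℝ} (hK : Integrable K volume)
    {φ : Torus3 → Fin 3 → ℝ} (hφ : Measurable φ) {C : ℝ} (hC : ∀ x, ‖φ x‖ ≤ C) (a : Torus3) :
    ∫ x, ∑ i, (∫ y, θ₀ y * K (x - a - y) i) * φ x i = ∫ u, θ₀ (u - a) * convKT K φ u := by
  set F : Torus3 × Torus3 → Fin 3 → ℝ := fun p => θ₀ p.2 • K (p.1 - a - p.2)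
  have hF : Integrable F (volume.prod volume) := by
    simpa [F, sub_right_comm] using
      hθ₀.convolution_integrand (ContinuousLinearMap.lsmul ℝ ℝ) (hK.comp_sub_right a)
  have hFφ : Integrable (fun p => ∑ i, F p i * φ p.1 i) (volume.prod volume) :=
    integrable_finsetSum _ fun i _ => (hF.eval i).mul_bdd
      ((measurable_pi_apply i).comp (hφ.comp measurable_fst)).aestronglyMeasurable
      (ae_of_all _ fun p => (norm_le_pi_norm (φ p.1) i).trans (hC p.1))
  calc ∫ x, ∑ i, (∫ y, θ₀ y * K (x - a - y) i) * φ x i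
      = ∫ x, ∫ y, ∑ i, F (x, y) i * φ x i := by
        refine integral_congr_ae ?_
        filter_upwards [hF.prod_right_ae] with x hx
        rw [integral_finsetSum _ fun i _ => (hx.eval i).mul_const _]
        simp only [integral_mul_const, F, Pi.smul_apply, smul_eq_mul]
    _ = ∫ y, ∫ x, ∑ i, F (x, y) i * φ x i := integral_integral_swap hFφ
    _ = ∫ y, θ₀ y * convKT K φ (y + a) := by
        congr 1 with y
        simp only [convKT, F, ← integral_const_mul, Finset.mul_sum, Pi.smul_apply, smul_eq_mul,
          sub_sub, add_comm a, mul_assoc]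
    _ = ∫ u, θ₀ (u - a) * convKT K φ u := by
        simpa using integral_add_right_eq_self (fun u => θ₀ (u - a) * convKT K φ u) a

theorem random_blob_field_covariance_general
    {Ω : Type*} [MeasurableSpace Ω] (Pr : Measure Ω) [IsProbabilityMeasure Pr]
    (X : Ω → Torus3) (hXmeas : Measurable X)
    (hXunif : Measure.map X Pr = volume)
    (R : Ω → ℝ) (hRmeas : Measurable R)
    (σ2 : ℝ) (hσ2 : (∫ ω, (R ω) ^ 2 ∂Pr) = σ2)
    (L : Ω → ℝ) (hLmeas : Measurable L) (hLpos : ∀ ω, 0 < L ω)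
    (f : ℝ → ℝ) (hf0 : ∀ ℓ, 0 ≤ f ℓ)
    (hLlaw : Measure.map L Pr = volume.withDensity fun ℓ => ENNReal.ofReal (f ℓ))
    (hRL : IndepFun R L Pr)
    (hXRL : IndepFun X (fun ω => (R ω, L ω)) Pr)
    (K : Torus3 → Fin 3 → ℝ) (hK : Integrable K volume)
    (θ : ℝ → Torus3 → ℝ)
    (hθmeas : Measurable (Function.uncurry θ))
    (hθint : ∀ ℓ : ℝ, 0 < ℓ → Integrable (θ ℓ) volume)
    (φ ψ : Torus3 → Fin 3 → ℝ) (hφmeas : Measurable φ) (hψmeas : Measurable ψ)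
    (Cφ : ℝ) (hφbdd : ∀ x, ‖φ x‖ ≤ Cφ) (Cψ : ℝ) (hψbdd : ∀ x, ‖ψ x‖ ≤ Cψ) :
    (∀ ω : Ω,
      (∫ x, R ω * ∑ i, (∫ y, θ (L ω) y * K (x - X ω - y) i) * φ x i) =
        R ω * convThetaT θ (L ω) (convKT K φ) (X ω)) ∧
    (Integrable (fun p : ℝ × Torus3 =>
        f p.1 * (convThetaT θ p.1 (convKT K φ) p.2 * convThetaT θ p.1 (convKT K ψ) p.2))
        (volume.prod volume) →
      (∫ ω, (∫ x, R ω * ∑ i, (∫ y, θ (L ω) y * K (x - X ω - y) i) * φ x i) *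
            (∫ x, R ω * ∑ i, (∫ y, θ (L ω) y * K (x - X ω - y) i) * ψ x i) ∂Pr) =
        σ2 * ∫ ℓ : ℝ, f ℓ *
          ∫ x, convThetaT θ ℓ (convKT K φ) x * convThetaT θ ℓ (convKT K ψ) x) := by
  have pairing : ∀ φ₀ : Torus3 → Fin 3 → ℝ, Measurable φ₀ → ∀ C : ℝ, (∀ x, ‖φ₀ x‖ ≤ C) →
      ∀ ω, (∫ x, R ω * ∑ i, (∫ y, θ (L ω) y * K (x - X ω - y) i) * φ₀ x i) =
        R ω * convThetaT θ (L ω) (convKT K φ₀) (X ω) := fun φ₀ hφ₀ C hC ω => by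
    rw [integral_const_mul, integral_convolution_dot_eq_integral_mul_convKT (hθint _ (hLpos ω))
      hK hφ₀ hC]
    rfl
  refine ⟨pairing φ hφmeas Cφ hφbdd, fun hfH => ?_⟩
  set H : ℝ × Torus3 → ℝ := fun p =>
    convThetaT θ p.1 (convKT K φ) p.2 * convThetaT θ p.1 (convKT K ψ) p.2
  have hH : Measurable H := (measurable_convThetaT hθmeas (measurable_convKT hK.1 hφmeas)).mul
    (measurable_convThetaT hθmeas (measurable_convKT hK.1 hψmeas))
  have hR_LX : IndepFun R (fun ω => (L ω, X ω)) Pr :=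
    hRL.prodMk_right_of_indepFun_prodMk hRmeas hLmeas hXmeas hXRL
  have hLX : Pr.map (fun ω => (L ω, X ω)) =
      (volume.withDensity fun ℓ => ENNReal.ofReal (f ℓ)).prod volume := by
    rw [(indepFun_iff_map_prod_eq_prod_map_map hLmeas.aemeasurable hXmeas.aemeasurable).1
      (hXRL.symm.comp measurable_snd measurable_id), hLlaw, hXunif]
  have : IsFiniteMeasure (volume.withDensity fun ℓ => ENNReal.ofReal (f ℓ)) :=
    hLlaw ▸ inferInstance
  calc _ = ∫ ω, R ω ^ 2 * H (L ω, X ω) ∂Pr := by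
          congr 1 with ω
          rw [pairing φ hφmeas Cφ hφbdd, pairing ψ hψmeas Cψ hψbdd]
          ring
    _ = (∫ ω, R ω ^ 2 ∂Pr) * ∫ ω, H (L ω, X ω) ∂Pr :=
        hR_LX.integral_fun_comp_mul_comp (f := fun r => r ^ 2) hRmeas.aemeasurable
          (hLmeas.prodMk hXmeas).aemeasurable (by fun_prop) hH.aestronglyMeasurable
    _ = σ2 * ∫ p, H p ∂(Pr.map fun ω => (L ω, X ω)) := by
        rw [hσ2, integral_map (hLmeas.prodMk hXmeas).aemeasurable hH.aestronglyMeasurable]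
    _ = _ := by rw [hLX, integral_prod_withDensity_ofReal hf0 hH.aemeasurable hfH]

/-- **Covariance of the random blob field** (second Lemma of Section 5.1).
With `X` uniform on `𝕋³`, `R` square-integrable with `𝔼[R²] = σ²`, `L` with density `f`
on `(0,∞)`, all mutually independent, and `E(x) = R (K ∗ θ_L)(x − X)`:
(i) `⟨E, φ⟩ = R (θ_L^T ∗ K^T ∗ φ)(X)` for bounded measurable `φ`; and
(ii) `𝔼[⟨E,φ⟩⟨E,ψ⟩] = σ² ∫₀^∞ ∫_{𝕋³} (θ_ℓ^T∗K^T∗φ)(x)(θ_ℓ^T∗K^T∗ψ)(x) dx f(ℓ) dℓ`,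
provided the right-hand side is (absolutely) finite. -/
theorem random_blob_field_covariance
    {Ω : Type*} [MeasurableSpace Ω] (Pr : Measure Ω) [IsProbabilityMeasure Pr]
    (X : Ω → Torus3) (hXmeas : Measurable X)
    (hXunif : Measure.map X Pr = volume)
    (R : Ω → ℝ) (hRmeas : Measurable R)
    (hR2 : Integrable (fun ω => (R ω) ^ 2) Pr)
    (σ2 : ℝ) (hσ2 : (∫ ω, (R ω) ^ 2 ∂Pr) = σ2)
    (L : Ω → ℝ) (hLmeas : Measurable L) (hLpos : ∀ ω, 0 < L ω)
    (f : ℝ → ℝ) (hf0 : ∀ ℓ, 0 ≤ f ℓ) (hfsupp : ∀ ℓ : ℝ, ℓ ≤ 0 → f ℓ = 0)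
    (hLlaw : Measure.map L Pr = volume.withDensity fun ℓ => ENNReal.ofReal (f ℓ))
    (hRL : IndepFun R L Pr)
    (hXRL : IndepFun X (fun ω => (R ω, L ω)) Pr)
    (K : Torus3 → Fin 3 → ℝ) (hK : Integrable K volume)
    (θ : ℝ → Torus3 → ℝ)
    (hθmeas : Measurable (Function.uncurry θ))
    (hθint : ∀ ℓ : ℝ, 0 < ℓ → Integrable (θ ℓ) volume)
    (hθL2 : ∀ ℓ : ℝ, 0 < ℓ → MemLp (θ ℓ) 2 volume)
    (φ ψ : Torus3 → Fin 3 → ℝ) (hφmeas : Measurable φ) (hψmeas : Measurable ψ)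
    (Cφ : ℝ) (hφbdd : ∀ x, ‖φ x‖ ≤ Cφ) (Cψ : ℝ) (hψbdd : ∀ x, ‖ψ x‖ ≤ Cψ) :
    (∀ ω : Ω,
      (∫ x, R ω * ∑ i, (∫ y, θ (L ω) y * K (x - X ω - y) i) * φ x i) =
        R ω * convThetaT θ (L ω) (convKT K φ) (X ω)) ∧
    (Integrable (fun p : ℝ × Torus3 =>
        f p.1 * (convThetaT θ p.1 (convKT K φ) p.2 * convThetaT θ p.1 (convKT K ψ) p.2))
        (volume.prod volume) →
      (∫ ω, (∫ x, R ω * ∑ i, (∫ y, θ (L ω) y * K (x - X ω - y) i) * φ x i) *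
            (∫ x, R ω * ∑ i, (∫ y, θ (L ω) y * K (x - X ω - y) i) * ψ x i) ∂Pr) =
        σ2 * ∫ ℓ : ℝ, f ℓ *
          ∫ x, convThetaT θ ℓ (convKT K φ) x * convThetaT θ ℓ (convKT K ψ) x) :=
  random_blob_field_covariance_general Pr X hXmeas hXunif R hRmeas σ2 hσ2 L hLmeas hLpos f hf0 hLlaw
    hRL hXRL K hK θ hθmeas hθint φ ψ hφmeas hψmeas Cφ hφbdd Cψ hψbdd
end
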